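/- arXiv:1111.2621 — 2 statements merged into one kernel-verified Lean document; each statement's English description precedes it below -/
import Mathlib

section
/- Rank-to-predecessor reduction correctness: given a string S of length n over alphabet [1,σ], define the point set P = { (S[c]−1)·n + c : c ∈ [1,n] } ⊆ [1, n·σ]. Then for any r ∈ [1,σ] and c ∈ [1,n], if p is the number of elements of P that are ≤ (r−1)·n + c (so p is the rank of the predecessor of (r−1)·n + c in P), and p > 0, then the p-th smallest element of P, written as (r'−1)·n + c', satisfies: r' = r implies rank_r(S,c) = rank_{r'}(S,c') and r' ≠ r implies rank_r(S,c) = 0. -/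
open Finset

private lemma mixlt (n x y a b : ℕ) (hx : 1 ≤ x) (hxy : x < y) (han : a ≤ n) (hb : 1 ≤ b) :
    (x - 1) * n + a < (y - 1) * n + b := by
  obtain ⟨m, rfl⟩ : ∃ m, x = m + 1 := ⟨x - 1, by omega⟩
  have h2 : (m + 1) * n ≤ (y - 1) * n := Nat.mul_le_mul_right n (by omega)
  have h3 : (m + 1) * n = m * n + n := by ring
  simp only [Nat.add_sub_cancel]
  omega

private lemma uniq (n a b x y : ℕ) (ha1 : 1 ≤ a) (han : a ≤ n) (hb1 : 1 ≤ b) (hbn : b ≤ n)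
    (hx : 1 ≤ x) (hy : 1 ≤ y) (h : (x - 1) * n + a = (y - 1) * n + b) : x = y ∧ a = b := by
  rcases lt_trichotomy x y with h' | h' | h'
  · have := mixlt n x y a b hx h' han hb1; omega
  · subst h'
    refine ⟨rfl, ?_⟩; omega
  · have := mixlt n y x b a hy h' hbn ha1; omega

private lemma decomp (n : ℕ) (S : ℕ → ℕ) (hS : ∀ c, 1 ≤ c → c ≤ n → 1 ≤ S c)
    (r c : ℕ) (hr : 1 ≤ r) (hc1 : 1 ≤ c) (hcn : c ≤ n) :
    (((Icc 1 n).image (fun k => (S k - 1) * n + k)).filter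
        (fun y => y ≤ (r - 1) * n + c)).card
      = ((Icc 1 n).filter (fun k => S k < r)).card
        + ((Icc 1 c).filter (fun k => S k = r)).card := by
  rw [Finset.filter_image]
  rw [Finset.card_image_of_injOn]
  · have hcongr : (Icc 1 n).filter (fun k => (S k - 1) * n + k ≤ (r - 1) * n + c)
        = (Icc 1 n).filter (fun k => S k < r ∨ (S k = r ∧ k ≤ c)) := by
      apply Finset.filter_congr
      intro k hk
      simp only [mem_Icc] at hk
      have hSk : 1 ≤ S k := hS k hk.1 hk.2
      constructor
      · intro h
        rcases lt_trichotomy (S k) r with h1 | h1 | h1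
        · exact Or.inl h1
        · right; exact ⟨h1, by subst h1; omega⟩
        · exfalso
          have := mixlt n r (S k) c k hr h1 hcn hk.1
          omega
      · intro h
        rcases h with h1 | ⟨h1, h2⟩
        · exact le_of_lt (mixlt n (S k) r k c hSk h1 hk.2 hc1)
        · subst h1; omega
    have hset : (Icc 1 n).filter (fun k => S k = r ∧ k ≤ c)
        = (Icc 1 c).filter (fun k => S k = r) := by
      ext k
      simp only [mem_filter, mem_Icc]
      omega
    rw [hcongr, Finset.filter_or, Finset.card_union_of_disjoint, hset]
    · rw [Finset.disjoint_left]
      intro k hk1 hk2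
      simp only [mem_filter] at hk1 hk2
      omega
  · intro a ha b hb hab
    simp only [coe_filter, Set.mem_setOf_eq, mem_coe, mem_Icc] at ha hb
    exact (uniq n a b (S a) (S b) ha.1.1 ha.1.2 hb.1.1 hb.1.2
      (hS a ha.1.1 ha.1.2) (hS b hb.1.1 hb.1.2) hab).2

theorem rank_to_predecessor_reduction (n σ : ℕ) (hn : 0 < n) (S : ℕ → ℕ)
    (hS : ∀ c, 1 ≤ c → c ≤ n → 1 ≤ S c ∧ S c ≤ σ)
    (P : Finset ℕ)
    (hP : P = (Finset.Icc 1 n).image (fun c => (S c - 1) * n + c))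
    (r c : ℕ) (hr1 : 1 ≤ r) (hrσ : r ≤ σ) (hc1 : 1 ≤ c) (hcn : c ≤ n)
    (p : ℕ) (hp : p = (P.filter (fun y => y ≤ (r - 1) * n + c)).card) (hppos : 0 < p)
    (e : ℕ) (he : e ∈ P) (hpe : (P.filter (fun y => y ≤ e)).card = p)
    (r' c' : ℕ) (hr'1 : 1 ≤ r') (hc'1 : 1 ≤ c') (hc'n : c' ≤ n)
    (he' : e = (r' - 1) * n + c') :
    (r' = r → ((Finset.Icc 1 c).filter (fun k => S k = r)).card =
        ((Finset.Icc 1 c').filter (fun k => S k = r')).card) ∧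
      (r' ≠ r → ((Finset.Icc 1 c).filter (fun k => S k = r)).card = 0) := by
  have hS1 : ∀ k, 1 ≤ k → k ≤ n → 1 ≤ S k := fun k h1 h2 => (hS k h1 h2).1
  subst hP
  -- S c' = r'
  have hSc' : S c' = r' := by
    obtain ⟨k, hk, hke⟩ := Finset.mem_image.mp he
    simp only [mem_Icc] at hk
    rw [he'] at hke
    have := uniq n k c' (S k) r' hk.1 hk.2 hc'1 hc'n (hS1 k hk.1 hk.2) hr'1 hke
    rw [← this.2, this.1]
  -- e ≤ (r-1)*n + c
  set Q : Finset ℕ := (Icc 1 n).image (fun c => (S c - 1) * n + c) with hQ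
  have heX : e ≤ (r - 1) * n + c := by
    by_contra hgt
    push_neg at hgt
    have hsub : insert e (Q.filter (fun y => y ≤ (r - 1) * n + c))
        ⊆ Q.filter (fun y => y ≤ e) := by
      intro y hy
      rcases Finset.mem_insert.mp hy with rfl | hy
      · exact Finset.mem_filter.mpr ⟨he, le_refl _⟩
      · simp only [Finset.mem_filter] at hy ⊢
        exact ⟨hy.1, le_trans hy.2 (le_of_lt hgt)⟩
    have hnotmem : e ∉ Q.filter (fun y => y ≤ (r - 1) * n + c) := by
      simp only [Finset.mem_filter]
      omega
    have := Finset.card_le_card hsub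
    rw [Finset.card_insert_of_notMem hnotmem] at this
    omega
  have hr'r : r' ≤ r := by
    by_contra hlt
    push_neg at hlt
    have := mixlt n r r' c c' hr1 hlt hcn hc'1
    omega
  constructor
  · intro hrr
    subst hrr
    have h1 := decomp n S hS1 r' c hr'1 hc1 hcn
    have h2 := decomp n S hS1 r' c' hr'1 hc'1 hc'n
    rw [← hQ] at h1 h2
    rw [← he'] at h2
    omega
  · intro hne
    have hr'lt : r' < r := lt_of_le_of_ne hr'r hne
    rw [Finset.card_eq_zero, Finset.filter_eq_empty_iff]
    intro k hk hSk
    simp only [mem_Icc] at hk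
    have hkn : k ≤ n := le_trans hk.2 hcn
    have hy0 : (r - 1) * n + k ∈ Q := by
      rw [hQ]
      apply Finset.mem_image.mpr
      exact ⟨k, Finset.mem_Icc.mpr ⟨hk.1, hkn⟩, by rw [hSk]⟩
    have hy0gt : e < (r - 1) * n + k := by
      rw [he']
      exact mixlt n r' r c' k hr'1 hr'lt hc'n hk.1
    have hsub : insert ((r - 1) * n + k) (Q.filter (fun y => y ≤ e))
        ⊆ Q.filter (fun y => y ≤ (r - 1) * n + c) := by
      intro y hy
      rcases Finset.mem_insert.mp hy with rfl | hy
      · exact Finset.mem_filter.mpr ⟨hy0, by omega⟩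
      · simp only [Finset.mem_filter] at hy ⊢
        exact ⟨hy.1, le_trans hy.2 heX⟩
    have hnotmem : (r - 1) * n + k ∉ Q.filter (fun y => y ≤ e) := by
      simp only [Finset.mem_filter]
      omega
    have := Finset.card_le_card hsub
    rw [Finset.card_insert_of_notMem hnotmem] at this
    omega
end

section
/- Popcount by multiplication: let b ≥ 1 and m be integers. If Y = Σ_{i<b} ε_i·2^{i·m} with ε_i ∈ {0,1} and 2^m > b, then for Z = Y · Σ_{j<b} 2^{j·m}, the field ((Z / 2^{(b−1)m}) mod 2^m) equals Σ_{i<b} ε_i. -/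
open Finset

lemma geom_mul_aux (x n : ℕ) : (x - 1) * ∑ j ∈ Finset.range n, x ^ j = x ^ n - 1 := by
  induction n with
  | zero => simp
  | succ n ih =>
    rw [Finset.sum_range_succ, Nat.mul_add, ih, pow_succ]
    rcases Nat.eq_zero_or_pos x with hx | hx
    · subst hx; cases n <;> simp
    · have hp : 1 ≤ x ^ n := Nat.one_le_pow _ _ hx
      have hxp : x ^ n ≤ x * x ^ n := Nat.le_mul_of_pos_left _ hx
      have : (x - 1) * x ^ n = x * x ^ n - x ^ n := by
        rw [Nat.sub_mul, one_mul]
      rw [this, mul_comm (x ^ n) x]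
      omega

lemma popcount_key (x b : ℕ) (hb : 1 ≤ b) (hbx : b < x) (ε : ℕ → ℕ)
    (hε : ∀ i < b, ε i ≤ 1) :
    ((∑ i ∈ Finset.range b, ε i * x ^ i) * (∑ j ∈ Finset.range b, x ^ j))
      / x ^ (b - 1) % x = ∑ i ∈ Finset.range b, ε i := by
  have hx : 2 ≤ x := lt_of_le_of_lt hb hbx
  have hxpos : 0 < x := by omega
  set A : ℕ → ℕ := fun i => ∑ j ∈ Finset.range (b - 1 - i), x ^ j with hA
  set C : ℕ → ℕ := fun i => ∑ t ∈ Finset.range i, x ^ t with hC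
  set L := ∑ i ∈ Finset.range b, ε i * x ^ i * A i with hLdef
  set S := ∑ i ∈ Finset.range b, ε i with hSdef
  set H := ∑ i ∈ Finset.range b, ε i * C i with hHdef
  have hdec : (∑ i ∈ Finset.range b, ε i * x ^ i) * (∑ j ∈ Finset.range b, x ^ j)
      = L + x ^ (b - 1) * (S + x * H) := by
    rw [Finset.sum_mul]
    have hterm : ∀ i ∈ Finset.range b,
        ε i * x ^ i * (∑ j ∈ Finset.range b, x ^ j)
          = ε i * x ^ i * A i + (x ^ (b - 1) * ε i + x ^ (b - 1) * (x * (ε i * C i))) := by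
      intro i hi
      rw [Finset.mem_range] at hi
      have hpow : x ^ i * x ^ (b - 1 - i) = x ^ (b - 1) := by
        rw [← pow_add]; congr 1; omega
      have hsplit : (∑ j ∈ Finset.range b, x ^ j)
          = A i + x ^ (b - 1 - i) * (1 + x * C i) := by
        have hb' : b = (b - 1 - i) + (i + 1) := by omega
        conv_lhs => rw [hb', Finset.sum_range_add]
        congr 1
        have : ∀ t, x ^ (b - 1 - i + t) = x ^ (b - 1 - i) * x ^ t := by
          intro t; rw [pow_add]
        simp_rw [this]
        rw [← Finset.mul_sum]
        congr 1
        rw [Finset.sum_range_succ' (fun t => x ^ t) i]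
        simp_rw [pow_succ, mul_comm (x ^ _) x]
        rw [← Finset.mul_sum, pow_zero]
        simp only [hC]
        omega
      rw [hsplit, Nat.mul_add]
      congr 1
      rw [show ε i * x ^ i * (x ^ (b - 1 - i) * (1 + x * C i))
            = (x ^ i * x ^ (b - 1 - i)) * (ε i * (1 + x * C i)) from by ring, hpow]
      ring
    rw [Finset.sum_congr rfl hterm, Finset.sum_add_distrib, Finset.sum_add_distrib,
      ← Finset.mul_sum, ← Finset.mul_sum, ← hLdef, ← hSdef]
    simp_rw [← Finset.mul_sum]
    rw [← hHdef]
    ring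
  have hL : L < x ^ (b - 1) := by
    have hxb1 : 1 ≤ x ^ (b - 1) := Nat.one_le_pow _ _ hxpos
    have h1 : (x - 1) * L ≤ b * (x ^ (b - 1) - 1) := by
      rw [hLdef, Finset.mul_sum]
      calc ∑ i ∈ Finset.range b, (x - 1) * (ε i * x ^ i * A i)
          ≤ ∑ _i ∈ Finset.range b, (x ^ (b - 1) - 1) := by
            apply Finset.sum_le_sum
            intro i hi
            rw [Finset.mem_range] at hi
            have hεi := hε i hi
            have hgA : (x - 1) * A i = x ^ (b - 1 - i) - 1 := geom_mul_aux x _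
            have hpi : 1 ≤ x ^ i := Nat.one_le_pow _ _ hxpos
            have hpow : x ^ i * x ^ (b - 1 - i) = x ^ (b - 1) := by
              rw [← pow_add]; congr 1; omega
            have hub : (x - 1) * (x ^ i * A i) ≤ x ^ (b - 1) - 1 := by
              have : (x - 1) * (x ^ i * A i) = x ^ i * ((x - 1) * A i) := by ring
              rw [this, hgA, Nat.mul_sub, mul_one, hpow]
              omega
            calc (x - 1) * (ε i * x ^ i * A i) ≤ (x - 1) * (1 * x ^ i * A i) := by
                  apply Nat.mul_le_mul_left
                  exact Nat.mul_le_mul_right _ (Nat.mul_le_mul_right _ hεi)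
              _ = (x - 1) * (x ^ i * A i) := by ring_nf
              _ ≤ x ^ (b - 1) - 1 := hub
        _ = b * (x ^ (b - 1) - 1) := by
            rw [Finset.sum_const, Finset.card_range, smul_eq_mul]
    have h2 : b * (x ^ (b - 1) - 1) ≤ (x - 1) * (x ^ (b - 1) - 1) :=
      Nat.mul_le_mul_right _ (by omega)
    have h3 : (x - 1) * L ≤ (x - 1) * (x ^ (b - 1) - 1) := le_trans h1 h2
    have h4 : L ≤ x ^ (b - 1) - 1 := Nat.le_of_mul_le_mul_left h3 (by omega)
    omega
  have hS : S < x := by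
    have : S ≤ ∑ _i ∈ Finset.range b, 1 := by
      apply Finset.sum_le_sum
      intro i hi
      exact hε i (Finset.mem_range.mp hi)
    simp at this
    omega
  rw [hdec, Nat.add_mul_div_left _ _ (Nat.pow_pos (n := b - 1) hxpos),
    Nat.div_eq_of_lt hL, Nat.zero_add, Nat.add_mul_mod_self_left,
    Nat.mod_eq_of_lt hS]

theorem popcount_by_multiplication (m b : ℕ) (hm : 1 ≤ m) (hb : 1 ≤ b)
    (ε : ℕ → ℕ) (hε : ∀ i < b, ε i ≤ 1) (hbm : b < 2 ^ m)
    (Y M : ℕ) (hY : Y = ∑ i ∈ Finset.range b, ε i * 2 ^ (i * m))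
    (hM : M = ∑ j ∈ Finset.range b, 2 ^ (j * m)) :
    (Y * M / 2 ^ ((b - 1) * m)) % 2 ^ m = ∑ i ∈ Finset.range b, ε i := by
  subst hY hM
  simp_rw [show ∀ i : ℕ, i * m = m * i from fun i => mul_comm i m, pow_mul]
  exact popcount_key (2 ^ m) b hb hbm ε hε
end
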